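/- If a homomorphism space Hom(G,H) is single-site fillable (equivalently, every locally admissible configuration is globally admissible), then Hom(G,H) satisfies topological strong spatial mixing (TSSM) with gap 2: for all finite subsets A, B, S of V(G) with dist(A,B) ≥ 2 and configurations α on A, σ on S, β on B, if ασ and σβ are each restrictions of points of Hom(G,H), then so is ασβ. -/

import Mathlib

/-- A graph, possibly with loops: a symmetric relation on vertices. -/
structure LoopGraph (V : Type*) where
  Adj : V → V → Prop
  symm : ∀ {u v : V}, Adj u v → Adj v u

namespace LoopGraph

variable {VG VH : Type*}

/-- `G.ReachIn n x y`: there is a walk of length exactly `n` from `x` to `y`. -/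
def ReachIn (G : LoopGraph VG) : ℕ → VG → VG → Prop
  | 0, x, y => x = y
  | n + 1, x, y => ∃ z, G.Adj x z ∧ G.ReachIn n z y

/-- `dist(A, B) ≥ g`: no walk of length `< g` connects a point of `A` to a point of `B`. -/
def DistGe (G : LoopGraph VG) (A B : Set VG) (g : ℕ) : Prop :=
  ∀ x ∈ A, ∀ y ∈ B, ∀ n < g, ¬ G.ReachIn n x y

/-- A graph homomorphism from `G` to `H`. -/
def IsHom (G : LoopGraph VG) (H : LoopGraph VH) (f : VG → VH) : Prop :=
  ∀ ⦃x y : VG⦄, G.Adj x y → H.Adj (f x) (f y)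

/-- `f` is a graph homomorphism on the subgraph of `G` induced by `S` (local admissibility). -/
def IsHomOn (G : LoopGraph VG) (H : LoopGraph VH) (f : VG → VH) (S : Set VG) : Prop :=
  ∀ ⦃x⦄, x ∈ S → ∀ ⦃y⦄, y ∈ S → G.Adj x y → H.Adj (f x) (f y)

/-- The configuration `α|_A` is globally admissible: it extends to a point of `Hom(G,H)`. -/
def GlobAdm (G : LoopGraph VG) (H : LoopGraph VH) (A : Set VG) (α : VG → VH) : Prop :=
  ∃ ω : VG → VH, G.IsHom H ω ∧ ∀ x ∈ A, ω x = α x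

/-- A board: countable, simple, connected, locally finite, with at least two vertices. -/
structure IsBoard (G : LoopGraph VG) : Prop where
  countable : Countable VG
  simple : ∀ v : VG, ¬ G.Adj v v
  connected : ∀ x y : VG, ∃ n : ℕ, G.ReachIn n x y
  locallyFinite : ∀ v : VG, {w : VG | G.Adj v w}.Finite
  nontrivial : Nontrivial VG

/-- Single-site fillability of `Hom(G, H)`. -/
def SSF (G : LoopGraph VG) (H : LoopGraph VH) : Prop :=
  ∀ (x : VG) (B : Set VG), B ⊆ {y : VG | G.Adj x y} →
    ∀ β : VG → VH, G.IsHomOn H β B →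
      ∃ α : VG → VH, G.IsHomOn H α (insert x B) ∧ ∀ y ∈ B, α y = β y

/-- Topological strong spatial mixing with gap `g`. -/
def TSSM (G : LoopGraph VG) (H : LoopGraph VH) (g : ℕ) : Prop :=
  ∀ (A B S : Set VG), A.Finite → B.Finite → S.Finite → G.DistGe A B g →
    ∀ α σ β : VG → VH,
      (∃ ω, G.IsHom H ω ∧ (∀ x ∈ A, ω x = α x) ∧ (∀ x ∈ S, ω x = σ x)) →
      (∃ ω, G.IsHom H ω ∧ (∀ x ∈ S, ω x = σ x) ∧ (∀ x ∈ B, ω x = β x)) →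
      ∃ ω, G.IsHom H ω ∧ (∀ x ∈ A, ω x = α x) ∧ (∀ x ∈ S, ω x = σ x) ∧
        ∀ x ∈ B, ω x = β x

/-- Strong irreducibility with gap `g`. -/
def StrongIrred (G : LoopGraph VG) (H : LoopGraph VH) (g : ℕ) : Prop :=
  ∀ (A B : Set VG), A.Finite → B.Finite → A.Nonempty → B.Nonempty → Disjoint A B →
    G.DistGe A B g → ∀ α β : VG → VH,
      G.GlobAdm H A α → G.GlobAdm H B β →
      ∃ ω, G.IsHom H ω ∧ (∀ x ∈ A, ω x = α x) ∧ ∀ x ∈ B, ω x = β x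

end LoopGraph

/-!
Under single-site fillability a locally admissible configuration can be extended one vertex at a
time (a board has no loops, so the new vertex only sees its neighbours), and enumerating the
countably many vertices yields a global homomorphism. For TSSM with gap 2, glue the two given
points: `ω₂` on `B` and `ω₁` elsewhere. Since `A` and `B` are at distance at least 2, every edge of
`A ∪ S ∪ B` lies inside `A ∪ S` or inside `S ∪ B`, where `ω₁`, resp. `ω₂`, is a homomorphism
agreeing with the glued map; so the glued configuration is locally, hence globally, admissible.
-/

namespace LoopGraph

variable {VG VH : Type*} {G : LoopGraph VG} {H : LoopGraph VH}

theorem DistGe.disjoint {A B : Set VG} {g : ℕ} (h : G.DistGe A B g) (hg : 0 < g) :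
    Disjoint A B :=
  Set.disjoint_left.mpr fun x hxA hxB => h x hxA x hxB 0 hg rfl

theorem DistGe.not_adj {A B : Set VG} {g : ℕ} (h : G.DistGe A B g) (hg : 1 < g)
    {x y : VG} (hx : x ∈ A) (hy : y ∈ B) : ¬ G.Adj x y :=
  fun hxy => h x hx y hy 1 hg ⟨y, hxy, rfl⟩

theorem isHomOn_piecewise {A B S : Set VG} {ω₁ ω₂ : VG → VH} [DecidablePred (· ∈ B)]
    (h₁ : G.IsHom H ω₁) (h₂ : G.IsHom H ω₂) (hS : ∀ x ∈ S, ω₁ x = ω₂ x)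
    (hAB : ∀ x ∈ A, ∀ y ∈ B, ¬ G.Adj x y) :
    G.IsHomOn H (B.piecewise ω₂ ω₁) (A ∪ S ∪ B) := by
  intro u hu v hv huv
  by_cases huB : u ∈ B <;> by_cases hvB : v ∈ B <;>
    simp only [Set.piecewise_eq_of_mem, Set.piecewise_eq_of_notMem, huB, hvB,
      not_false_eq_true]
  · exact h₂ huv
  · obtain hvA | hvS := hv.resolve_right hvB
    · exact absurd (G.symm huv) (hAB v hvA u huB)
    · exact hS v hvS ▸ h₂ huv
  · obtain huA | huS := hu.resolve_right huB
    · exact absurd huv (hAB u huA v hvB)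
    · exact hS u huS ▸ h₂ huv
  · exact h₁ huv

theorem exists_isHom_of_coherent {S : ℕ → Set VG} {f : ℕ → VG → VH} (hmono : Monotone S)
    (hcover : ∀ x, ∃ n, x ∈ S n) (hf : ∀ n, G.IsHomOn H (f n) (S n))
    (hcoh : ∀ n, ∀ x ∈ S n, f (n + 1) x = f n x) :
    ∃ ω, G.IsHom H ω ∧ ∀ n, ∀ x ∈ S n, ω x = f n x := by
  have hcoh' : ∀ n m, n ≤ m → ∀ x ∈ S n, f m x = f n x := by
    intro n m hnm x hx
    induction m, hnm using Nat.le_induction with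
    | base => rfl
    | succ m hnm ih => rw [hcoh m x (hmono hnm hx), ih]
  choose N hN using hcover
  have hω : ∀ x m, N x ≤ m → f (N x) x = f m x := fun x m h => (hcoh' _ m h x (hN x)).symm
  refine ⟨fun x => f (N x) x, fun x y hxy => ?_, fun n x hx => ?_⟩
  · let m := max (N x) (N y)
    show H.Adj (f (N x) x) (f (N y) y)
    rw [hω x m (le_max_left _ _), hω y m (le_max_right _ _)]
    exact hf m (hmono (le_max_left _ _) (hN x)) (hmono (le_max_right _ _) (hN y)) hxy
  · rcases le_total (N x) n with h | h
    · exact hω x n h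
    · exact hcoh' n (N x) h x hx

theorem globAdm_of_forall_extend_insert [Countable VG]
    (hext : ∀ (S : Set VG) (f : VG → VH), G.IsHomOn H f S → ∀ x,
      ∃ f', G.IsHomOn H f' (insert x S) ∧ ∀ y ∈ S, f' y = f y)
    {F : Set VG} {α : VG → VH} (hα : G.IsHomOn H α F) : G.GlobAdm H F α := by
  cases isEmpty_or_nonempty VG
  · exact ⟨α, fun x => isEmptyElim x, fun _ _ => rfl⟩
  obtain ⟨e, he⟩ := exists_surjective_nat VG
  choose next hnext hagree using hext
  let seq : ℕ → {p : Set VG × (VG → VH) // G.IsHomOn H p.2 p.1} := fun n =>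
    Nat.rec ⟨(F, α), hα⟩
      (fun k p => ⟨(insert (e k) p.1.1, next _ _ p.2 (e k)), hnext _ _ p.2 (e k)⟩) n
  obtain ⟨ω, hω, hωseq⟩ := exists_isHom_of_coherent (S := fun n => (seq n).1.1)
    (f := fun n => (seq n).1.2)
    (monotone_nat_of_le_succ fun n => Set.subset_insert _ _)
    (fun x => by obtain ⟨k, rfl⟩ := he x; exact ⟨k + 1, Set.mem_insert _ _⟩)
    (fun n => (seq n).2) (fun n => hagree _ _ (seq n).2 (e n))
  exact ⟨ω, hω, hωseq 0⟩

theorem SSF.exists_extend_insert (hssf : G.SSF H) (hsimple : ∀ v, ¬ G.Adj v v)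
    {S : Set VG} {f : VG → VH} (hf : G.IsHomOn H f S) (x : VG) :
    ∃ f', G.IsHomOn H f' (insert x S) ∧ ∀ y ∈ S, f' y = f y := by
  classical
  by_cases hxS : x ∈ S
  · exact ⟨f, by rwa [Set.insert_eq_of_mem hxS], fun _ _ => rfl⟩
  obtain ⟨f₀, hf₀, hf₀f⟩ := hssf x {y | y ∈ S ∧ G.Adj x y} (fun _ hy => hy.2) f
    (fun u hu v hv huv => hf hu.1 hv.1 huv)
  have hne : ∀ y ∈ S, y ≠ x := fun y hy hyx => hxS (hyx ▸ hy)
  have hx : ∀ v ∈ S, G.Adj x v → H.Adj (f₀ x) (f v) := fun v hv hxv =>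
    hf₀f v ⟨hv, hxv⟩ ▸ hf₀ (Set.mem_insert _ _) (Set.mem_insert_of_mem _ ⟨hv, hxv⟩) hxv
  refine ⟨Function.update f x (f₀ x), fun u hu v hv huv => ?_,
    fun y hy => Function.update_of_ne (hne y hy) _ _⟩
  rcases hu with rfl | hu <;> rcases hv with rfl | hv
  · exact absurd huv (hsimple _)
  · rw [Function.update_self, Function.update_of_ne (hne v hv)]
    exact hx v hv huv
  · rw [Function.update_self, Function.update_of_ne (hne u hu)]
    exact H.symm (hx u hu (G.symm huv))
  · rw [Function.update_of_ne (hne u hu), Function.update_of_ne (hne v hv)]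
    exact hf hu hv huv

theorem SSF.globAdm_of_isHomOn [Countable VG] (hssf : G.SSF H) (hsimple : ∀ v, ¬ G.Adj v v)
    {F : Set VG} {α : VG → VH} (hα : G.IsHomOn H α F) : G.GlobAdm H F α :=
  globAdm_of_forall_extend_insert (fun _ _ hf => hssf.exists_extend_insert hsimple hf) hα

end LoopGraph

theorem SSF_implies_TSSM_gap_two_general {VG VH : Type} (G : LoopGraph VG) (H : LoopGraph VH)
    (hG : G.IsBoard) (hssf : G.SSF H) : G.TSSM H 2 := by
  classical
  rintro A B S - - - hdist α σ β ⟨ω₁, hω₁, hω₁A, hω₁S⟩ ⟨ω₂, hω₂, hω₂S, hω₂B⟩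
  have hglue := LoopGraph.isHomOn_piecewise hω₁ hω₂
    (fun x hx => (hω₁S x hx).trans (hω₂S x hx).symm)
    (fun x hx y hy => hdist.not_adj one_lt_two hx hy)
  have := hG.countable
  obtain ⟨ω, hω, hωglue⟩ := hssf.globAdm_of_isHomOn hG.simple hglue
  refine ⟨ω, hω, fun x hx => ?_, fun x hx => ?_, fun x hx => ?_⟩
  · have hxB : x ∉ B := (hdist.disjoint two_pos).notMem_of_mem_left hx
    rw [hωglue x (by simp [hx]), Set.piecewise_eq_of_notMem _ _ _ hxB, hω₁A x hx]
  · rw [hωglue x (by simp [hx])]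
    by_cases hxB : x ∈ B
    · rw [Set.piecewise_eq_of_mem _ _ _ hxB, hω₂S x hx]
    · rw [Set.piecewise_eq_of_notMem _ _ _ hxB, hω₁S x hx]
  · rw [hωglue x (by simp [hx]), Set.piecewise_eq_of_mem _ _ _ hx, hω₂B x hx]

/-- If `Hom(G, H)` is single-site fillable, then it satisfies TSSM with gap 2. -/
theorem SSF_implies_TSSM_gap_two {VG VH : Type} [Fintype VH] (G : LoopGraph VG) (H : LoopGraph VH)
    (hG : G.IsBoard) (hssf : G.SSF H) : G.TSSM H 2 :=
  SSF_implies_TSSM_gap_two_general G H hG hssf
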